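/- If m1, m2 > 0, t > 0 and p ∈ [0,1), then f(0) < 0, f(m1 + m2) > 0, and f((m1 + m2)/2) > 0. -/
import Mathlib
set_option maxHeartbeats 1600000

/-- The quartic polynomial `f` whose root gives the sum `y = x1 + x2`
at a non-extreme equilibrium. -/
noncomputable def f (m1 m2 t p y : ℝ) : ℝ :=
  (1-p)^2*t*y^4
  - (1-p)*(4*t^2 + 4*(m1+m2)*t + (1+p)^2*m1*m2)*y^3
  + (4*t^3 + 8*(m1+m2)*t^2
      + (4*m1^2 + 4*m2^2 + 11*m1*m2 + 3*p^2*m1*m2 - 2*p*m1*m2)*t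
      + (1+p)^2*m1*m2*(m1+m2))*y^2
  + (1-p)*m1*m2*((1+p)^2*m1*m2 - 4*(m1+m2)*t - 4*t^2)*y
  - m1^2*m2^2*((1+p)^2*(m1+m2) + 4*p*t)

/-- Sign of `f` at `0`, `m1+m2`, and the midpoint `(m1+m2)/2`. -/
theorem stmt12 (m1 m2 t p : ℝ) (hm1 : 0 < m1) (hm2 : 0 < m2)
    (ht : 0 < t) (hp0 : 0 ≤ p) (hp1 : p < 1) :
    f m1 m2 t p 0 < 0 ∧ 0 < f m1 m2 t p (m1+m2) ∧ 0 < f m1 m2 t p ((m1+m2)/2) := by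
  refine ⟨?_, ?_, ?_⟩
  · have h : f m1 m2 t p 0 = -(m1^2*m2^2*((1+p)^2*(m1+m2) + 4*p*t)) := by
      unfold f; ring
    rw [h, neg_lt_zero]
    have h1 : (0:ℝ) < (1+p)^2*(m1+m2) := by positivity
    have h2 : (0:ℝ) ≤ 4*p*t := by positivity
    have : (0:ℝ) < (1+p)^2*(m1+m2) + 4*p*t := by linarith
    positivity
  · have h : f m1 m2 t p (m1+m2) =
      4*m2^2*t^3 + 4*m2^3*t^2 + 4*m2^3*t^2*p + m2^4*t + 2*m2^4*t*p + m2^4*t*p^2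
      + 8*m1*m2*t^3 + 8*m1*m2^2*t^2 + 16*m1*m2^2*t^2*p + 3*m1*m2^3*t
      + 10*m1*m2^3*t*p + 7*m1*m2^3*t*p^2 + m1*m2^4*p + 2*m1*m2^4*p^2 + m1*m2^4*p^3
      + 4*m1^2*t^3 + 8*m1^2*m2*t^2 + 16*m1^2*m2*t^2*p + 4*m1^2*m2^2*t
      + 12*m1^2*m2^2*t*p + 12*m1^2*m2^2*t*p^2 + 2*m1^2*m2^3*p + 4*m1^2*m2^3*p^2
      + 2*m1^2*m2^3*p^3 + 4*m1^3*t^2 + 4*m1^3*t^2*p + 3*m1^3*m2*t + 10*m1^3*m2*t*p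
      + 7*m1^3*m2*t*p^2 + 2*m1^3*m2^2*p + 4*m1^3*m2^2*p^2 + 2*m1^3*m2^2*p^3
      + m1^4*t + 2*m1^4*t*p + m1^4*t*p^2 + m1^4*m2*p + 2*m1^4*m2*p^2 + m1^4*m2*p^3 := by
      unfold f; ring
    rw [h]; positivity
  · have h : f m1 m2 t p ((m1+m2)/2) =
      (1/8)*(1+p)^3*m1*m2*(m1+m2)*(m1-m2)^2
      + (m2^2*t^3 + (3/2)*m2^3*t^2 + (1/2)*m2^3*t^2*p + (9/16)*m2^4*t
        + (3/8)*m2^4*t*p + (1/16)*m2^4*t*p^2 + 2*m1*m2*t^3 + (5/2)*m1*m2^2*t^2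
        + (7/2)*m1*m2^2*t^2*p + m1*m2^3*t + 3*m1*m2^3*t*p + m1*m2^3*t*p^2
        + m1^2*t^3 + (5/2)*m1^2*m2*t^2 + (7/2)*m1^2*m2*t^2*p + (7/8)*m1^2*m2^2*t
        + (5/4)*m1^2*m2^2*t*p + (15/8)*m1^2*m2^2*t*p^2 + (3/2)*m1^3*t^2
        + (1/2)*m1^3*t^2*p + m1^3*m2*t + 3*m1^3*m2*t*p + m1^3*m2*t*p^2
        + (9/16)*m1^4*t + (3/8)*m1^4*t*p + (1/16)*m1^4*t*p^2) := by
      unfold f; ring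
    rw [h]
    have h1 : (0:ℝ) ≤ (1/8)*(1+p)^3*m1*m2*(m1+m2)*(m1-m2)^2 := by positivity
    have h2 : (0:ℝ) < m2^2*t^3 + (3/2)*m2^3*t^2 + (1/2)*m2^3*t^2*p + (9/16)*m2^4*t
        + (3/8)*m2^4*t*p + (1/16)*m2^4*t*p^2 + 2*m1*m2*t^3 + (5/2)*m1*m2^2*t^2
        + (7/2)*m1*m2^2*t^2*p + m1*m2^3*t + 3*m1*m2^3*t*p + m1*m2^3*t*p^2
        + m1^2*t^3 + (5/2)*m1^2*m2*t^2 + (7/2)*m1^2*m2*t^2*p + (7/8)*m1^2*m2^2*t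
        + (5/4)*m1^2*m2^2*t*p + (15/8)*m1^2*m2^2*t*p^2 + (3/2)*m1^3*t^2
        + (1/2)*m1^3*t^2*p + m1^3*m2*t + 3*m1^3*m2*t*p + m1^3*m2*t*p^2
        + (9/16)*m1^4*t + (3/8)*m1^4*t*p + (1/16)*m1^4*t*p^2 := by positivity
    linarith
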